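/- A logic ⊢ is either assertional or almost assertional if and only if there is a formula ψ(x) such that y ⊢ ψ(x) and, for every formula φ(v, z⃗), the rule x, y, φ(x, z⃗) ⊢ φ(y, z⃗) is valid in ⊢. -/

import Mathlib

/-!
If every nonempty filter of a matrix semantics is `{ψ^A}` with `ψ^A` constant, then `y ⊢ ψ(x)`
holds, and two designated elements are always equal, which validates `x, y, φ(x) ⊢ φ(y)`.

Conversely, the rules `x, y, φ(x, z⃗) ⊢ φ(y, z⃗)` say that any two theorems of a theory `T` are
indiscernible by the unary polynomials of the formula algebra, i.e. congruent modulo the Leibniz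
congruence `Ω T`, and `y ⊢ ψ(x)` puts every `ψ(a)` into `T` as soon as `T` is nonempty. Hence in
the Leibniz reductions of the Lindenbaum matrices, which form a matrix semantics of any logic,
every nonempty filter is the single class of `ψ(a)`. Whether the logic has theorems decides
between assertional and almost assertional.
-/

/-- An algebraic signature: a type of operation symbols with arities. -/
structure Sig : Type 1 where
  Op : Type
  ar : Op → ℕ

/-- Formulas (terms) over a signature, with variables indexed by ℕ. -/
inductive Fm (L : Sig) : Type where
  | var : ℕ → Fm L
  | op : (f : L.Op) → (Fin (L.ar f) → Fm L) → Fm L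

/-- An algebra for the signature `L`. -/
structure Alg (L : Sig) : Type 1 where
  carrier : Type
  interp : (f : L.Op) → (Fin (L.ar f) → carrier) → carrier

/-- Evaluation of a formula in an algebra under a valuation of the variables. -/
def Fm.eval {L : Sig} (A : Alg L) (v : ℕ → A.carrier) : Fm L → A.carrier
  | .var n => v n
  | .op f as => A.interp f (fun i => (as i).eval A v)

/-- Substitution (endomorphism of the formula algebra). -/
def Fm.subst {L : Sig} (σ : ℕ → Fm L) : Fm L → Fm L
  | .var n => σ n
  | .op f as => .op f (fun i => (as i).subst σ)

/-- The set of variables occurring in a formula. -/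
def Fm.vars {L : Sig} : Fm L → Set ℕ
  | .var n => {n}
  | .op _ as => ⋃ i, (as i).vars

/-- Substitute the formula `ψ` for the variable `v` in `φ`. -/
def Fm.subst1 {L : Sig} (v : ℕ) (ψ : Fm L) (φ : Fm L) : Fm L :=
  φ.subst (fun n => if n = v then ψ else .var n)

/-- A logic: a substitution-invariant (finitary or not) consequence relation on formulas. -/
structure Logic (L : Sig) : Type where
  deriv : Set (Fm L) → Fm L → Prop
  axm : ∀ Γ φ, φ ∈ Γ → deriv Γ φ
  mono : ∀ Γ Δ φ, Γ ⊆ Δ → deriv Γ φ → deriv Δ φ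
  cut : ∀ Γ Δ φ, deriv Γ φ → (∀ γ ∈ Γ, deriv Δ γ) → deriv Δ φ
  substInv : ∀ (σ : ℕ → Fm L) Γ φ, deriv Γ φ → deriv (Fm.subst σ '' Γ) (φ.subst σ)

/-- A logical matrix: an algebra with a set of designated elements. -/
structure LMatrix (L : Sig) : Type 1 where
  alg : Alg L
  F : Set alg.carrier

/-- The consequence relation induced by a class of matrices. -/
def inducedBy {L : Sig} (M : Set (LMatrix L)) (Γ : Set (Fm L)) (φ : Fm L) : Prop :=
  ∀ m ∈ M, ∀ v : ℕ → m.alg.carrier,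
    (∀ γ ∈ Γ, γ.eval m.alg v ∈ m.F) → φ.eval m.alg v ∈ m.F

/-- `M` is a matrix semantics for the logic `ℒ`. -/
def IsMatrixSemantics {L : Sig} (ℒ : Logic L) (M : Set (LMatrix L)) : Prop :=
  ∀ Γ φ, ℒ.deriv Γ φ ↔ inducedBy M Γ φ

/-- Equational consequence relative to a class of algebras (equations as pairs of formulas). -/
def eqConseq {L : Sig} (K : Set (Alg L)) (Θ : Set (Fm L × Fm L)) (e : Fm L × Fm L) : Prop :=
  ∀ A ∈ K, ∀ v : ℕ → A.carrier,
    (∀ p ∈ Θ, p.1.eval A v = p.2.eval A v) → e.1.eval A v = e.2.eval A v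

/-- `τ(φ)`: the result of substituting `φ` for the variable `x` (= variable 0) in each
equation of `τ`. -/
def tauApp {L : Sig} (τ : Set (Fm L × Fm L)) (φ : Fm L) : Set (Fm L × Fm L) :=
  (fun e => (Fm.subst1 0 φ e.1, Fm.subst1 0 φ e.2)) '' τ

/-- `τ[Γ]`. -/
def tauAppSet {L : Sig} (τ : Set (Fm L × Fm L)) (Γ : Set (Fm L)) : Set (Fm L × Fm L) :=
  ⋃ γ ∈ Γ, tauApp τ γ

/-- `τ` is a set of equations in the single variable `x` (= variable 0). -/
def IsUnivalent {L : Sig} (τ : Set (Fm L × Fm L)) : Prop :=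
  ∀ e ∈ τ, e.1.vars ⊆ ({0} : Set ℕ) ∧ e.2.vars ⊆ ({0} : Set ℕ)

/-- `K` is a `τ`-algebraic semantics for `ℒ`: `Γ ⊢ φ` iff `τ[Γ] ⊨_K τ(φ)`. -/
def IsTauAlgSem {L : Sig} (ℒ : Logic L) (τ : Set (Fm L × Fm L)) (K : Set (Alg L)) : Prop :=
  IsUnivalent τ ∧ ∀ Γ φ, ℒ.deriv Γ φ ↔ ∀ e ∈ tauApp τ φ, eqConseq K (tauAppSet τ Γ) e

/-- `ℒ` has an algebraic semantics (admits an equational completeness theorem). -/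
def HasAlgSem {L : Sig} (ℒ : Logic L) : Prop :=
  ∃ (τ : Set (Fm L × Fm L)) (K : Set (Alg L)), IsTauAlgSem ℒ τ K

/-- `θ` is a congruence of the algebra `A`. -/
def IsCong {L : Sig} (A : Alg L) (θ : A.carrier → A.carrier → Prop) : Prop :=
  Equivalence θ ∧ ∀ (f : L.Op) (as bs : Fin (L.ar f) → A.carrier),
    (∀ i, θ (as i) (bs i)) → θ (A.interp f as) (A.interp f bs)

/-- The congruence of `A` generated by `X` (least congruence containing `X`). -/
def congGen {L : Sig} (A : Alg L) (X : Set (A.carrier × A.carrier))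
    (a c : A.carrier) : Prop :=
  ∀ θ, IsCong A θ → (∀ p ∈ X, θ p.1 p.2) → θ a c

/-- `p` is a unary polynomial function of `A`: `p(a) = φ^A(a, c⃗)` for a formula `φ(x, y⃗)`
and parameters `c⃗` from `A`. -/
def IsUnaryPoly {L : Sig} (A : Alg L) (p : A.carrier → A.carrier) : Prop :=
  ∃ (φ : Fm L) (c : ℕ → A.carrier),
    ∀ a, p a = φ.eval A (fun n => if n = 0 then a else c n)

/-- Compatibility of a relation with a set. -/
def Compatible {L : Sig} (A : Alg L) (θ : A.carrier → A.carrier → Prop)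
    (F : Set A.carrier) : Prop :=
  ∀ a c, θ a c → a ∈ F → c ∈ F

/-- The Leibniz congruence `Ω^A F`: the largest congruence of `A` compatible with `F`
(realized as the union of all congruences compatible with `F`). -/
def leibniz {L : Sig} (A : Alg L) (F : Set A.carrier) (a c : A.carrier) : Prop :=
  ∃ θ, IsCong A θ ∧ Compatible A θ F ∧ θ a c

/-- The formula algebra. -/
def FmAlg (L : Sig) : Alg L :=
  ⟨Fm L, fun f as => Fm.op f as⟩

/-- `ℒ` has no theorems. -/
def LacksTheorems {L : Sig} (ℒ : Logic L) : Prop :=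
  ¬ ∃ φ, ℒ.deriv ∅ φ

/-- `ℒ` is assertional. -/
def Assertional {L : Sig} (ℒ : Logic L) : Prop :=
  ∃ (M : Set (LMatrix L)) (φ : Fm L), IsMatrixSemantics ℒ M ∧ φ.vars ⊆ ({0} : Set ℕ) ∧
    ∀ m ∈ M, ∃ c : m.alg.carrier,
      (∀ a : m.alg.carrier, φ.eval m.alg (fun _ => a) = c) ∧ m.F = {c}

/-- `ℒ` is almost assertional. -/
def AlmostAssertional {L : Sig} (ℒ : Logic L) : Prop :=
  LacksTheorems ℒ ∧
  ∃ (M : Set (LMatrix L)) (φ : Fm L), IsMatrixSemantics ℒ M ∧ φ.vars ⊆ ({0} : Set ℕ) ∧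
    ∀ m ∈ M, m.F.Nonempty → ∃ c : m.alg.carrier,
      (∀ a : m.alg.carrier, φ.eval m.alg (fun _ => a) = c) ∧ m.F = {c}

/-- Two formulas are logically equivalent in `ℒ`. -/
def LogEquiv {L : Sig} (ℒ : Logic L) (ε δ : Fm L) : Prop :=
  ∀ (φ : Fm L) (v : ℕ),
    ℒ.deriv {Fm.subst1 v ε φ} (Fm.subst1 v δ φ) ∧
    ℒ.deriv {Fm.subst1 v δ φ} (Fm.subst1 v ε φ)

namespace Fm
variable {L : Sig}

theorem eval_subst (A : Alg L) (σ : ℕ → Fm L) (v : ℕ → A.carrier) (φ : Fm L) :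
    (φ.subst σ).eval A v = φ.eval A (fun n => (σ n).eval A v) := by
  induction φ with
  | var n => rfl
  | op f as ih => exact congrArg (A.interp f) (funext ih)

theorem eval_congr (A : Alg L) {u w : ℕ → A.carrier} (φ : Fm L)
    (h : ∀ n ∈ φ.vars, u n = w n) : φ.eval A u = φ.eval A w := by
  induction φ with
  | var n => exact h n rfl
  | op f as ih =>
    exact congrArg (A.interp f) <| funext fun i =>
      ih i fun n hn => h n (Set.mem_iUnion.2 ⟨i, hn⟩)

theorem eval_fmAlg (σ : ℕ → Fm L) (φ : Fm L) : φ.eval (FmAlg L) σ = φ.subst σ := by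
  induction φ with
  | var n => rfl
  | op f as ih => exact congrArg (Fm.op f) (funext ih)

theorem subst_var (φ : Fm L) : φ.subst Fm.var = φ := by
  induction φ with
  | var n => rfl
  | op f as ih => exact congrArg (Fm.op f) (funext ih)

theorem subst_subst (σ τ : ℕ → Fm L) (φ : Fm L) :
    (φ.subst σ).subst τ = φ.subst (fun n => (σ n).subst τ) := by
  induction φ with
  | var n => rfl
  | op f as ih => exact congrArg (Fm.op f) (funext ih)

theorem eval_subst1_var (A : Alg L) (v : ℕ → A.carrier) (φ : Fm L) (w k : ℕ) :
    (Fm.subst1 w (Fm.var k) φ).eval A v = φ.eval A (fun n => if n = w then v k else v n) := by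
  rw [subst1, eval_subst]
  congr 1
  funext n
  split_ifs <;> rfl

theorem eval_const_of_vars_subset {A : Alg L} {φ : Fm L} (hφ : φ.vars ⊆ ({0} : Set ℕ))
    (v : ℕ → A.carrier) : φ.eval A v = φ.eval A (fun _ => v 0) :=
  eval_congr A φ fun n hn => by rw [hφ hn]

end Fm

theorem Pi.rel_of_forall_rel_update {ι α : Type*} [Fintype ι] [DecidableEq ι]
    {r : α → α → Prop} {s : (ι → α) → (ι → α) → Prop} (hrefl : ∀ x, s x x)
    (htrans : ∀ {x y z}, s x y → s y z → s x z)
    (hupdate : ∀ x i a, r (x i) a → s x (Function.update x i a))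
    {x y : ι → α} (h : ∀ i, r (x i) (y i)) : s x y := by
  have key : ∀ t : Finset ι, s x (t.piecewise y x) := by
    intro t
    induction t using Finset.induction_on with
    | empty => simpa using hrefl x
    | insert j t hj ih =>
      rw [Finset.piecewise_insert]
      refine htrans ih (hupdate _ _ _ ?_)
      rw [Finset.piecewise_eq_of_notMem _ _ _ hj]
      exact h j
  simpa using key Finset.univ

namespace IsUnaryPoly
variable {L : Sig} {A : Alg L}

theorem id [Nonempty A.carrier] : IsUnaryPoly A fun a => a :=
  ⟨.var 0, fun _ => Classical.arbitrary _, fun _ => rfl⟩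

theorem comp {p q : A.carrier → A.carrier} (hp : IsUnaryPoly A p) (hq : IsUnaryPoly A q) :
    IsUnaryPoly A (p ∘ q) := by
  obtain ⟨φ, c, hφ⟩ := hp
  obtain ⟨χ, d, hχ⟩ := hq
  -- the parameters of `χ` are moved to even, those of `φ` to odd variables
  refine ⟨φ.subst fun n => if n = 0 then χ.subst (fun m => if m = 0 then .var 0 else .var (2 * m))
      else .var (2 * n + 1), fun m => if m % 2 = 0 then d (m / 2) else c (m / 2), fun a => ?_⟩
  rw [Function.comp_apply, hφ, hχ, Fm.eval_subst]
  congr 1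
  funext n
  rcases eq_or_ne n 0 with rfl | hn
  · rw [if_pos rfl, if_pos rfl, Fm.eval_subst]
    congr 1
    funext m
    rcases eq_or_ne m 0 with rfl | hm
    · simp [Fm.eval]
    · simp [Fm.eval, hm]
  · have : (2 * n + 1) / 2 = n := by omega
    simp [Fm.eval, hn, Nat.add_mod, this]

theorem interp_update (f : L.Op) (x : Fin (L.ar f) → A.carrier) (i : Fin (L.ar f)) :
    IsUnaryPoly A fun a => A.interp f (Function.update x i a) := by
  refine ⟨.op f fun k => if k = i then .var 0 else .var (k + 1),
    fun n => if h : n - 1 < L.ar f then x ⟨n - 1, h⟩ else x i, fun a => ?_⟩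
  simp only [Fm.eval]
  congr 1
  funext k
  rcases eq_or_ne k i with rfl | hk
  · simp [Fm.eval]
  · simp [Fm.eval, hk]

end IsUnaryPoly

section Leibniz
variable {L : Sig} {A : Alg L} {F : Set A.carrier}

/-- The Leibniz congruence `Ω^A F`, in its characterisation by unary polynomials. -/
def polyLeibniz (A : Alg L) (F : Set A.carrier) (a b : A.carrier) : Prop :=
  ∀ p, IsUnaryPoly A p → (p a ∈ F ↔ p b ∈ F)

theorem polyLeibniz.trans {a b c : A.carrier} (hab : polyLeibniz A F a b)
    (hbc : polyLeibniz A F b c) : polyLeibniz A F a c :=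
  fun p hp => (hab p hp).trans (hbc p hp)

theorem polyLeibniz.interp_update {a b : A.carrier} (h : polyLeibniz A F a b) (f : L.Op)
    (x : Fin (L.ar f) → A.carrier) (i : Fin (L.ar f)) :
    polyLeibniz A F (A.interp f (Function.update x i a)) (A.interp f (Function.update x i b)) :=
  fun _ hp => h _ (hp.comp (IsUnaryPoly.interp_update f x i))

theorem polyLeibniz_isCong (A : Alg L) (F : Set A.carrier) : IsCong A (polyLeibniz A F) := by
  refine ⟨⟨fun _ _ _ => Iff.rfl, fun h p hp => (h p hp).symm, polyLeibniz.trans⟩, ?_⟩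
  intro f as bs h
  refine Pi.rel_of_forall_rel_update
    (s := fun x y => polyLeibniz A F (A.interp f x) (A.interp f y))
    (fun _ _ _ => Iff.rfl) polyLeibniz.trans (fun x i a hxa => ?_) h
  simpa using hxa.interp_update f x i

theorem polyLeibniz_compatible (A : Alg L) (F : Set A.carrier) :
    Compatible A (polyLeibniz A F) F := fun a _ h ha =>
  have : Nonempty A.carrier := ⟨a⟩
  (h _ IsUnaryPoly.id).1 ha

end Leibniz

namespace IsCong
variable {L : Sig} {A : Alg L} {θ : A.carrier → A.carrier → Prop}

def setoid (hθ : IsCong A θ) : Setoid A.carrier := ⟨θ, hθ.1⟩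

noncomputable abbrev quotient (hθ : IsCong A θ) : Alg L :=
  ⟨Quotient hθ.setoid, fun f qs => Quotient.mk _ (A.interp f fun i => (qs i).out)⟩

theorem eval_quotient (hθ : IsCong A θ) (v : ℕ → A.carrier) (φ : Fm L) :
    φ.eval hθ.quotient (fun n => Quotient.mk hθ.setoid (v n))
      = Quotient.mk hθ.setoid (φ.eval A v) := by
  induction φ with
  | var n => rfl
  | op f as ih =>
    exact Quotient.sound (hθ.2 f _ _ fun i =>
      Quotient.exact (s := hθ.setoid) ((Quotient.out_eq _).trans (ih i)))

end IsCong

namespace LMatrix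
variable {L : Sig} (m : LMatrix L)

def Models (Γ : Set (Fm L)) (φ : Fm L) : Prop :=
  ∀ v : ℕ → m.alg.carrier, (∀ γ ∈ Γ, γ.eval m.alg v ∈ m.F) → φ.eval m.alg v ∈ m.F

def IsAssertionalBy (ψ : Fm L) : Prop :=
  ∃ c : m.alg.carrier, (∀ a, ψ.eval m.alg (fun _ => a) = c) ∧ m.F = {c}

noncomputable abbrev reduction : LMatrix L :=
  ⟨(polyLeibniz_isCong m.alg m.F).quotient,
    Quotient.mk (polyLeibniz_isCong m.alg m.F).setoid '' m.F⟩

theorem mk_mem_reduction_F {a : m.alg.carrier} :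
    Quotient.mk (polyLeibniz_isCong m.alg m.F).setoid a ∈ m.reduction.F ↔ a ∈ m.F :=
  ⟨fun ⟨_, hb, hba⟩ => polyLeibniz_compatible _ _ _ _ (Quotient.exact hba) hb,
    fun ha => ⟨a, ha, rfl⟩⟩

theorem eval_reduction (v : ℕ → m.alg.carrier) (φ : Fm L) :
    φ.eval m.reduction.alg (fun n => Quotient.mk (polyLeibniz_isCong m.alg m.F).setoid (v n))
      = Quotient.mk _ (φ.eval m.alg v) :=
  IsCong.eval_quotient _ v φ

theorem reduction_models_iff {Γ : Set (Fm L)} {φ : Fm L} :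
    m.reduction.Models Γ φ ↔ m.Models Γ φ := by
  have hmem : ∀ (v : ℕ → m.alg.carrier) (χ : Fm L),
      χ.eval m.reduction.alg (fun n => Quotient.mk _ (v n)) ∈ m.reduction.F ↔
        χ.eval m.alg v ∈ m.F := fun v χ => by
    rw [eval_reduction, mk_mem_reduction_F]
  constructor
  · intro h v hΓ
    exact (hmem v φ).1 (h _ fun γ hγ => (hmem v γ).2 (hΓ γ hγ))
  · intro h w hΓ
    obtain ⟨v, rfl⟩ : ∃ v : ℕ → m.alg.carrier, w = fun n => Quotient.mk _ (v n) :=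
      ⟨fun n => (w n).out, funext fun n => (Quotient.out_eq _).symm⟩
    exact (hmem _ φ).2 (h _ fun γ hγ => (hmem _ γ).1 (hΓ γ hγ))

end LMatrix

theorem inducedBy_range_iff {L : Sig} {ι : Type*} (m : ι → LMatrix L) (Γ : Set (Fm L))
    (φ : Fm L) : inducedBy (Set.range m) Γ φ ↔ ∀ i, (m i).Models Γ φ :=
  Set.forall_mem_range

namespace Logic
variable {L : Sig} (ℒ : Logic L)

def ValidatesReplacement : Prop :=
  ∀ (φ : Fm L) (v : ℕ),
    ℒ.deriv {Fm.var 0, Fm.var 1, Fm.subst1 v (Fm.var 0) φ} (Fm.subst1 v (Fm.var 1) φ)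

def lindenbaum (Γ : Set (Fm L)) : LMatrix L := ⟨FmAlg L, {φ | ℒ.deriv Γ φ}⟩

theorem lindenbaum_models_iff {Δ Γ : Set (Fm L)} {φ : Fm L} :
    (ℒ.lindenbaum Δ).Models Γ φ ↔
      ∀ σ : ℕ → Fm L, (∀ γ ∈ Γ, ℒ.deriv Δ (γ.subst σ)) → ℒ.deriv Δ (φ.subst σ) := by
  change (∀ σ : ℕ → Fm L, (∀ γ ∈ Γ, ℒ.deriv Δ (γ.eval (FmAlg L) σ)) →
    ℒ.deriv Δ (φ.eval (FmAlg L) σ)) ↔ _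
  simp only [Fm.eval_fmAlg]

theorem isMatrixSemantics_lindenbaum : IsMatrixSemantics ℒ (Set.range ℒ.lindenbaum) := by
  intro Γ φ
  simp only [inducedBy_range_iff, lindenbaum_models_iff]
  constructor
  · intro hΓφ Δ σ hΓ
    refine ℒ.cut _ _ _ (ℒ.substInv σ Γ φ hΓφ) ?_
    rintro _ ⟨γ, hγ, rfl⟩
    exact hΓ γ hγ
  · intro h
    have hΓ : ∀ γ ∈ Γ, ℒ.deriv Γ (γ.subst Fm.var) := fun γ hγ => by
      simpa only [Fm.subst_var] using ℒ.axm Γ γ hγ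
    simpa only [Fm.subst_var] using h Γ Fm.var hΓ

theorem isMatrixSemantics_reduction_lindenbaum :
    IsMatrixSemantics ℒ (Set.range fun Γ => (ℒ.lindenbaum Γ).reduction) := fun Γ φ => by
  rw [ℒ.isMatrixSemantics_lindenbaum Γ φ, inducedBy_range_iff, inducedBy_range_iff]
  simp only [LMatrix.reduction_models_iff]

theorem deriv_of_isUnaryPoly
    (hrule : ℒ.ValidatesReplacement)
    (α β : Fm L) {p : Fm L → Fm L} (hp : IsUnaryPoly (FmAlg L) p) :
    ℒ.deriv {α, β, p α} (p β) := by
  obtain ⟨φ, c, hφ⟩ := hp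
  -- move the parameters of `φ` past the variables `0` and `1` of the rule, then instantiate
  set ρ : ℕ → Fm L := fun n => if n = 0 then .var 0 else .var (n + 1)
  set τ : ℕ → Fm L := fun m => if m = 0 then α else if m = 1 then β else c (m - 1)
  have hτ : ∀ k, (Fm.subst1 0 (.var k) (φ.subst ρ)).subst τ
      = φ.subst fun n => if n = 0 then τ k else c n := by
    intro k
    simp only [Fm.subst1, Fm.subst_subst]
    congr 1
    funext n
    rcases eq_or_ne n 0 with rfl | hn
    · simp [ρ, Fm.subst]
    · simp only [ρ, τ, Fm.subst, hn, ↓reduceIte, Nat.add_eq_zero_iff, one_ne_zero, and_self,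
        Nat.add_eq_right, add_tsub_cancel_right]
      rfl
  have hp : ∀ a : Fm L, p a = φ.subst fun n => if n = 0 then a else c n :=
    fun a => (hφ a).trans (Fm.eval_fmAlg _ φ)
  have h := ℒ.substInv τ _ _ (hrule (φ.subst ρ) 0)
  rw [Set.image_insert_eq, Set.image_insert_eq, Set.image_singleton, hτ 0, hτ 1] at h
  rw [hp α, hp β]
  exact h

theorem deriv_subst_const {ψ : Fm L} (hψ : ψ.vars ⊆ ({0} : Set ℕ))
    (hψ₁ : ℒ.deriv {Fm.var 1} ψ) (α β : Fm L) : ℒ.deriv {β} (ψ.subst fun _ => α) := by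
  have h := ℒ.substInv (fun n => if n = 1 then β else α) _ _ hψ₁
  have hconst : ψ.subst (fun n => if n = 1 then β else α) = ψ.subst fun _ => α :=
    (Fm.eval_fmAlg _ ψ).symm.trans
      ((Fm.eval_const_of_vars_subset hψ _).trans (Fm.eval_fmAlg _ ψ))
  rw [Set.image_singleton, hconst] at h
  exact h

theorem polyLeibniz_lindenbaum
    (hrule : ℒ.ValidatesReplacement)
    {Γ : Set (Fm L)} {α β : Fm L} (hα : ℒ.deriv Γ α) (hβ : ℒ.deriv Γ β) :
    polyLeibniz (ℒ.lindenbaum Γ).alg (ℒ.lindenbaum Γ).F α β := by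
  have replace : ∀ {a b}, ℒ.deriv Γ a → ℒ.deriv Γ b → ∀ p, IsUnaryPoly (FmAlg L) p →
      ℒ.deriv Γ (p a) → ℒ.deriv Γ (p b) := fun ha hb p hp hpa =>
    ℒ.cut _ _ _ (ℒ.deriv_of_isUnaryPoly hrule _ _ hp) fun γ hγ => by
      rcases hγ with rfl | rfl | hγ
      exacts [ha, hb, Set.mem_singleton_iff.1 hγ ▸ hpa]
  exact fun p hp => ⟨replace hα hβ p hp, replace hβ hα p hp⟩

theorem reduction_lindenbaum_isAssertionalBy {ψ : Fm L} (hψ : ψ.vars ⊆ ({0} : Set ℕ))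
    (hψ₁ : ℒ.deriv {Fm.var 1} ψ)
    (hrule : ℒ.ValidatesReplacement)
    (Γ : Set (Fm L)) (hne : (ℒ.lindenbaum Γ).reduction.F.Nonempty) :
    (ℒ.lindenbaum Γ).reduction.IsAssertionalBy ψ := by
  obtain ⟨_, β, hβ, rfl⟩ := hne
  have hclass : ∀ α, ℒ.deriv Γ α → (Quotient.mk _ α : (ℒ.lindenbaum Γ).reduction.alg.carrier)
      = Quotient.mk _ β := fun α hα =>
    Quotient.sound (ℒ.polyLeibniz_lindenbaum hrule hα hβ)
  refine ⟨Quotient.mk _ β, fun q => ?_, Set.ext fun q => ?_⟩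
  · induction q using Quotient.inductionOn with | h a => ?_
    refine ((ℒ.lindenbaum Γ).eval_reduction (fun _ => a) ψ).trans (hclass _ ?_)
    have h : ℒ.deriv Γ (ψ.subst fun _ => a) :=
      ℒ.cut _ _ _ (ℒ.deriv_subst_const hψ hψ₁ a β) (by rintro _ rfl; exact hβ)
    exact (congrArg (ℒ.deriv Γ) (Fm.eval_fmAlg (fun _ => a) ψ)).mpr h
  · induction q using Quotient.inductionOn with | h a => ?_
    exact ⟨fun ⟨α, hα, he⟩ => he ▸ hclass α hα, fun he => ⟨β, hβ, he.symm⟩⟩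

theorem deriv_var_one_of_isMatrixSemantics {M : Set (LMatrix L)} {ψ : Fm L}
    (hsem : IsMatrixSemantics ℒ M) (hψ : ψ.vars ⊆ ({0} : Set ℕ))
    (hM : ∀ m ∈ M, m.F.Nonempty → m.IsAssertionalBy ψ) : ℒ.deriv {Fm.var 1} ψ := by
  refine (hsem _ _).2 fun m hm v hv => ?_
  have hv₁ : v 1 ∈ m.F := hv _ rfl
  obtain ⟨c, hc, hF⟩ := hM m hm ⟨_, hv₁⟩
  rw [Fm.eval_const_of_vars_subset hψ, hc, hF]
  rfl

theorem validatesReplacement_of_isMatrixSemantics {M : Set (LMatrix L)} {ψ : Fm L}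
    (hsem : IsMatrixSemantics ℒ M) (hM : ∀ m ∈ M, m.F.Nonempty → m.IsAssertionalBy ψ) :
    ℒ.ValidatesReplacement := by
  refine fun φ v => (hsem _ _).2 fun m hm w hw => ?_
  have hw₀ : w 0 ∈ m.F := hw (.var 0) (by simp)
  have hw₁ : w 1 ∈ m.F := hw (.var 1) (by simp)
  have hφ := hw (Fm.subst1 v (.var 0) φ) (by simp)
  obtain ⟨c, -, hF⟩ := hM m hm ⟨_, hw₀⟩
  have hw₀₁ : w 0 = w 1 := by
    rw [hF] at hw₀ hw₁
    exact hw₀.trans hw₁.symm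
  rw [Fm.eval_subst1_var] at hφ ⊢
  rwa [← hw₀₁]

theorem exists_isMatrixSemantics_of_assertional_or_almostAssertional
    (h : Assertional ℒ ∨ AlmostAssertional ℒ) :
    ∃ (M : Set (LMatrix L)) (ψ : Fm L), IsMatrixSemantics ℒ M ∧ ψ.vars ⊆ ({0} : Set ℕ) ∧
      ∀ m ∈ M, m.F.Nonempty → m.IsAssertionalBy ψ := by
  rcases h with ⟨M, ψ, hsem, hψ, hM⟩ | ⟨-, M, ψ, hsem, hψ, hM⟩
  exacts [⟨M, ψ, hsem, hψ, fun m hm _ => hM m hm⟩, ⟨M, ψ, hsem, hψ, hM⟩]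

theorem assertional_or_almostAssertional_of_isMatrixSemantics {M : Set (LMatrix L)}
    {ψ : Fm L} (hsem : IsMatrixSemantics ℒ M) (hψ : ψ.vars ⊆ ({0} : Set ℕ))
    (hM : ∀ m ∈ M, m.F.Nonempty → m.IsAssertionalBy ψ)
    (hne : ∀ m ∈ M, Nonempty m.alg.carrier) : Assertional ℒ ∨ AlmostAssertional ℒ := by
  by_cases hthm : ∃ θ, ℒ.deriv ∅ θ
  · obtain ⟨θ, hθ⟩ := hthm
    refine Or.inl ⟨M, ψ, hsem, hψ, fun m hm => hM m hm ?_⟩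
    obtain ⟨a⟩ := hne m hm
    exact ⟨_, (hsem ∅ θ).1 hθ m hm (fun _ => a) (by simp)⟩
  · exact Or.inr ⟨hthm, M, ψ, hsem, hψ, hM⟩

end Logic

/-- A logic is assertional or almost assertional iff there is a formula `ψ(x)` with
`y ⊢ ψ(x)` and the rules `x, y, φ(x, z⃗) ⊢ φ(y, z⃗)` are valid for every `φ(v, z⃗)`. -/
theorem assertional_or_almost_assertional_iff {L : Sig} (ℒ : Logic L) :
    (Assertional ℒ ∨ AlmostAssertional ℒ) ↔
      ∃ ψ : Fm L, ψ.vars ⊆ ({0} : Set ℕ) ∧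
        ℒ.deriv {Fm.var 1} ψ ∧
        ∀ (φ : Fm L) (v : ℕ),
          ℒ.deriv {Fm.var 0, Fm.var 1, Fm.subst1 v (Fm.var 0) φ}
            (Fm.subst1 v (Fm.var 1) φ) := by
  constructor
  · intro h
    obtain ⟨M, ψ, hsem, hψ, hM⟩ :=
      ℒ.exists_isMatrixSemantics_of_assertional_or_almostAssertional h
    exact ⟨ψ, hψ, ℒ.deriv_var_one_of_isMatrixSemantics hsem hψ hM,
      ℒ.validatesReplacement_of_isMatrixSemantics hsem hM⟩
  · rintro ⟨ψ, hψ, hψ₁, hrule⟩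
    refine ℒ.assertional_or_almostAssertional_of_isMatrixSemantics
      ℒ.isMatrixSemantics_reduction_lindenbaum hψ ?_ ?_
    · rintro _ ⟨Γ, rfl⟩
      exact ℒ.reduction_lindenbaum_isAssertionalBy hψ hψ₁ hrule Γ
    · rintro _ ⟨Γ, rfl⟩
      exact ⟨Quotient.mk _ (Fm.var 0)⟩
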